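/- Let (X,d_X) and (Y,d_Y) be nonempty ultrametric spaces and let d be a partial distance-preserving metric on X × Y such that max{d_X(x₁,x₂), d_Y(y₁,y₂)} ≤ d((x₁,y₁),(x₂,y₂)) for all (x₁,y₁), (x₂,y₂) ∈ X × Y, and suppose d((x₁,y₁),(x₂,y₂)) = d((x₂,y₁),(x₁,y₂)) for all x₁, x₂ ∈ X and y₁, y₂ ∈ Y. Then (X × Y, d) is ultrametric if and only if N_ε(W × Z) = N_ε(W) · N_ε(Z) holds for all compact sets W ⊆ X, Z ⊆ Y and every ε > 0, where the covering number on W × Z is computed with respect to d. -/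

import Mathlib

/-!
In an ultrametric space two points at distance `> ε` can never share an `ε`-center, so every
`ε`-distinguishable subset of `S` injects into every `ε`-net of `S`; as a maximal one is itself a
net, the covering number of `S` is the cardinality of any maximal `ε`-distinguishable subset.
Products of maximal distinguishable sets are distinguishable and are nets for the sup metric,
whence multiplicativity for the sup metric. Both directions then reduce to `d` being the sup
metric. If `d` is ultrametric, the ultra-triangle inequality through `(x₂, y₁)` bounds `d` by the
sup metric. Conversely, at scale `ε = max (dist x₁ x₂) (dist y₁ y₂)` each two-point factor has
covering number at most `1`, so the rectangle `{x₁, x₂} × {y₁, y₂}` is covered by one of its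
corners; by the symmetry hypothesis both diagonals have length `d (x₁, y₁) (x₂, y₂)`, and the
center lies on one of them, so `d (x₁, y₁) (x₂, y₂) ≤ ε`.
-/

open Cardinal Set

universe u

/-- `C` is an `ε`-net for `W` (w.r.t. the distance function `d`): every point of `W`
is within distance `ε` of some point of `C`. -/
def IsNet {α : Type u} (d : α → α → ℝ) (ε : ℝ) (W C : Set α) : Prop :=
  ∀ w ∈ W, ∃ c ∈ C, d w c ≤ ε

/-- `A` is `ε`-distinguishable: distinct points of `A` are at distance `> ε`. -/
def IsDistinguishable {α : Type u} (d : α → α → ℝ) (ε : ℝ) (A : Set α) : Prop :=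
  ∀ x ∈ A, ∀ y ∈ A, x ≠ y → ε < d x y

/-- `N̂ᴬ_ε(W)`: the smallest cardinality of a set `C ⊆ A` which is an `ε`-net for `W`. -/
noncomputable def coveringNumberIn {α : Type u} (d : α → α → ℝ) (ε : ℝ) (A W : Set α) :
    Cardinal.{u} :=
  sInf {κ | ∃ C : Set α, C ⊆ A ∧ IsNet d ε W C ∧ #C = κ}

/-- `M*_ε(W)`: the smallest cardinal `≥ card A` for every `ε`-distinguishable `A ⊆ W`. -/
noncomputable def packingNumberSup {α : Type u} (d : α → α → ℝ) (ε : ℝ) (W : Set α) :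
    Cardinal.{u} :=
  sSup {κ | ∃ A : Set α, A ⊆ W ∧ IsDistinguishable d ε A ∧ #A = κ}

/-- `M̂_ε(W)`: the smallest cardinality of a maximal `ε`-distinguishable subset of `W`. -/
noncomputable def maximalPackingInf {α : Type u} (d : α → α → ℝ) (ε : ℝ) (W : Set α) :
    Cardinal.{u} :=
  sInf {κ | ∃ A : Set α, A ⊆ W ∧ IsDistinguishable d ε A ∧
    (∀ B : Set α, B ⊆ W → IsDistinguishable d ε B → A ⊆ B → A = B) ∧ #A = κ}

/-- `d` is a metric (distance function satisfying the metric axioms). -/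
def IsMetricOn {α : Type*} (d : α → α → ℝ) : Prop :=
  (∀ x, d x x = 0) ∧ (∀ x y, d x y = 0 → x = y) ∧ (∀ x y, d x y = d y x) ∧
    (∀ x y z, d x z ≤ d x y + d y z)

/-- `d` satisfies the ultra-triangle inequality. -/
def IsUltrametricOn {α : Type*} (d : α → α → ℝ) : Prop :=
  ∀ x y z, d x z ≤ max (d x y) (d y z)

/-- `d` is a partial distance-preserving distance function on `X × Y`. -/
def PartialDistPreserving {X Y : Type*} [MetricSpace X] [MetricSpace Y]
    (d : X × Y → X × Y → ℝ) : Prop :=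
  (∀ (x₁ x₂ : X) (y : Y), d (x₁, y) (x₂, y) = dist x₁ x₂) ∧
    (∀ (x : X) (y₁ y₂ : Y), d (x, y₁) (x, y₂) = dist y₁ y₂)

/-- `d` is a distance-increasing distance function on `X × Y`. -/
def DistanceIncreasing {X Y : Type*} [MetricSpace X] [MetricSpace Y]
    (d : X × Y → X × Y → ℝ) : Prop :=
  ∀ (x₁ x₂ x₃ x₄ : X) (y₁ y₂ y₃ y₄ : Y),
    dist x₁ x₂ ≤ dist x₃ x₄ → dist y₁ y₂ ≤ dist y₃ y₄ →
      d (x₁, y₁) (x₂, y₂) ≤ d (x₃, y₃) (x₄, y₄)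

instance Prod.instIsUltrametricDist {X Y : Type*} [PseudoMetricSpace X] [PseudoMetricSpace Y]
    [IsUltrametricDist X] [IsUltrametricDist Y] : IsUltrametricDist (X × Y) :=
  ⟨fun p q r => max_le
    ((dist_triangle_max p.1 q.1 r.1).trans (max_le_max (le_max_left _ _) (le_max_left _ _)))
    ((dist_triangle_max p.2 q.2 r.2).trans (max_le_max (le_max_right _ _) (le_max_right _ _)))⟩

section General

variable {α : Type u} {ρ : α → α → ℝ} {ε : ℝ} {S C : Set α}

lemma coveringNumberIn_le_mk (hCS : C ⊆ S) (hC : IsNet ρ ε S C) :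
    coveringNumberIn ρ ε S S ≤ #C :=
  csInf_le' ⟨C, hCS, hC, rfl⟩

lemma exists_isNet_mk_eq_coveringNumberIn (hρ : ∀ x, ρ x x ≤ ε) (S : Set α) :
    ∃ C ⊆ S, IsNet ρ ε S C ∧ #C = coveringNumberIn ρ ε S S :=
  csInf_mem (s := {κ | ∃ C ⊆ S, IsNet ρ ε S C ∧ #C = κ})
    ⟨#S, S, subset_rfl, fun w hw => ⟨w, hw, hρ w⟩, rfl⟩

lemma exists_center_of_coveringNumberIn_le_one (hρ : ∀ x, ρ x x ≤ ε) (hS : S.Nonempty)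
    (h : coveringNumberIn ρ ε S S ≤ 1) : ∃ c ∈ S, ∀ p ∈ S, ρ p c ≤ ε := by
  obtain ⟨C, hCS, hC, hCcard⟩ := exists_isNet_mk_eq_coveringNumberIn hρ S
  have hCsub : C.Subsingleton := mk_le_one_iff_set_subsingleton.1 (hCcard.trans_le h)
  obtain ⟨p, hp⟩ := hS
  obtain ⟨c, hcC, -⟩ := hC p hp
  refine ⟨c, hCS hcC, fun q hq => ?_⟩
  obtain ⟨c', hc'C, hqc'⟩ := hC q hq
  rwa [hCsub hc'C hcC] at hqc'

lemma exists_maximal_isDistinguishable (ρ : α → α → ℝ) (ε : ℝ) (S : Set α) :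
    ∃ A, Maximal (fun B => B ⊆ S ∧ IsDistinguishable ρ ε B) A := by
  refine zorn_subset _ fun c hc hchain => ⟨⋃₀ c, ⟨sUnion_subset fun s hs => (hc hs).1, ?_⟩,
    fun s hs => subset_sUnion_of_mem hs⟩
  rintro x ⟨A, hA, hxA⟩ y ⟨B, hB, hyB⟩ hxy
  rcases hchain.total hA hB with hAB | hBA
  · exact (hc hB).2 x (hAB hxA) y hyB hxy
  · exact (hc hA).2 x hxA y (hBA hyB) hxy

end General

section PseudoMetric

variable {α : Type u} [PseudoMetricSpace α] {ε : ℝ} {S A C : Set α}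

lemma isNet_of_maximal_isDistinguishable (hε : 0 ≤ ε)
    (hA : Maximal (fun B => B ⊆ S ∧ IsDistinguishable dist ε B) A) : IsNet dist ε S A := by
  by_contra hnet
  obtain ⟨w, hwS, hw⟩ : ∃ w ∈ S, ∀ c ∈ A, ε < dist w c := by simpa [IsNet] using hnet
  have hins : insert w A ⊆ S ∧ IsDistinguishable dist ε (insert w A) := by
    refine ⟨insert_subset hwS hA.1.1, ?_⟩
    rintro x (rfl | hx) y (rfl | hy) hxy
    · exact absurd rfl hxy
    · exact hw y hy
    · exact dist_comm y x ▸ hw x hx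
    · exact hA.1.2 x hx y hy hxy
  have hwA : w ∈ A := hA.2 hins (subset_insert w A) (mem_insert w A)
  exact (hw w hwA).not_ge ((dist_self w).trans_le hε)

lemma coveringNumberIn_pair_le_one {x₁ x₂ : α} (h : dist x₁ x₂ ≤ ε) :
    coveringNumberIn dist ε {x₁, x₂} {x₁, x₂} ≤ 1 := by
  have hnet : IsNet dist ε {x₁, x₂} {x₁} := by
    rintro w (rfl | rfl)
    · exact ⟨w, rfl, (dist_self w).trans_le (dist_nonneg.trans h)⟩
    · exact ⟨x₁, rfl, dist_comm w x₁ ▸ h⟩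
  exact (coveringNumberIn_le_mk (singleton_subset_iff.2 (mem_insert _ _)) hnet).trans_eq
    (mk_singleton x₁)

variable [IsUltrametricDist α]

lemma mk_le_mk_of_isDistinguishable_of_isNet (hAS : A ⊆ S) (hA : IsDistinguishable dist ε A)
    (hC : IsNet dist ε S C) : #A ≤ #C := by
  choose f hfC hf using fun a : A => hC a (hAS a.2)
  refine mk_le_of_injective (f := fun a => (⟨f a, hfC a⟩ : C)) fun a b hab => ?_
  by_contra hne
  have hfab : f a = f b := congrArg Subtype.val hab
  have hclose : dist (a : α) b ≤ ε :=
    (dist_triangle_max (a : α) (f a) b).trans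
      (max_le (hf a) (by rw [dist_comm, hfab]; exact hf b))
  exact (hA a a.2 b b.2 (Subtype.coe_injective.ne hne)).not_ge hclose

lemma mk_le_coveringNumberIn (hε : 0 ≤ ε) (hAS : A ⊆ S) (hA : IsDistinguishable dist ε A) :
    #A ≤ coveringNumberIn dist ε S S := by
  obtain ⟨C, -, hC, hCcard⟩ :=
    exists_isNet_mk_eq_coveringNumberIn (fun x => (dist_self x).trans_le hε) S
  exact hCcard ▸ mk_le_mk_of_isDistinguishable_of_isNet hAS hA hC

end PseudoMetric

section Prod

variable {X Y : Type u} [PseudoMetricSpace X] [PseudoMetricSpace Y] {ε : ℝ}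

lemma IsNet.prod {W C : Set X} {Z D : Set Y} (hC : IsNet dist ε W C) (hD : IsNet dist ε Z D) :
    IsNet dist ε (W ×ˢ Z) (C ×ˢ D) := by
  rintro ⟨w, z⟩ ⟨hw, hz⟩
  obtain ⟨c, hcC, hwc⟩ := hC w hw
  obtain ⟨e, heD, hze⟩ := hD z hz
  exact ⟨(c, e), ⟨hcC, heD⟩, max_le hwc hze⟩

lemma IsDistinguishable.prod {A : Set X} {B : Set Y} (hA : IsDistinguishable dist ε A)
    (hB : IsDistinguishable dist ε B) : IsDistinguishable dist ε (A ×ˢ B) := by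
  rintro ⟨a, b⟩ ⟨ha, hb⟩ ⟨a', b'⟩ ⟨ha', hb'⟩ hne
  by_cases haa : a = a'
  · exact lt_max_of_lt_right (hB b hb b' hb' fun hbb => hne (Prod.ext haa hbb))
  · exact lt_max_of_lt_left (hA a ha a' ha' haa)

theorem coveringNumberIn_prod [IsUltrametricDist X] [IsUltrametricDist Y] (hε : 0 ≤ ε)
    (W : Set X) (Z : Set Y) :
    coveringNumberIn dist ε (W ×ˢ Z) (W ×ˢ Z) =
      coveringNumberIn dist ε W W * coveringNumberIn dist ε Z Z := by
  obtain ⟨A, hA⟩ := exists_maximal_isDistinguishable dist ε W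
  obtain ⟨B, hB⟩ := exists_maximal_isDistinguishable dist ε Z
  have hAB : A ×ˢ B ⊆ W ×ˢ Z := prod_mono hA.1.1 hB.1.1
  have hANet := isNet_of_maximal_isDistinguishable hε hA
  have hBNet := isNet_of_maximal_isDistinguishable hε hB
  have hWA : coveringNumberIn dist ε W W = #A :=
    (coveringNumberIn_le_mk hA.1.1 hANet).antisymm (mk_le_coveringNumberIn hε hA.1.1 hA.1.2)
  have hZB : coveringNumberIn dist ε Z Z = #B :=
    (coveringNumberIn_le_mk hB.1.1 hBNet).antisymm (mk_le_coveringNumberIn hε hB.1.1 hB.1.2)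
  rw [hWA, hZB, ← mk_setProd]
  exact (coveringNumberIn_le_mk hAB (hANet.prod hBNet)).antisymm
    (mk_le_coveringNumberIn hε hAB (hA.1.2.prod hB.1.2))

end Prod

section ProductDistance

variable {X Y : Type u} {d : X × Y → X × Y → ℝ}

lemma apply_le_of_center_mem_rectangle {ε : ℝ} (hcomm : ∀ p q, d p q = d q p)
    (hsymm : ∀ (x₁ x₂ : X) (y₁ y₂ : Y), d (x₁, y₁) (x₂, y₂) = d (x₂, y₁) (x₁, y₂))
    {x₁ x₂ : X} {y₁ y₂ : Y} {c : X × Y} (hc : c ∈ ({x₁, x₂} : Set X) ×ˢ ({y₁, y₂} : Set Y))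
    (h : ∀ p ∈ ({x₁, x₂} : Set X) ×ˢ ({y₁, y₂} : Set Y), d p c ≤ ε) :
    d (x₁, y₁) (x₂, y₂) ≤ ε := by
  obtain ⟨a, b⟩ := c
  have corner : ∀ x ∈ ({x₁, x₂} : Set X), ∀ y ∈ ({y₁, y₂} : Set Y), d (x, y) (a, b) ≤ ε :=
    fun x hx y hy => h (x, y) ⟨hx, hy⟩
  simp only [mem_prod, mem_insert_iff, mem_singleton_iff] at hc
  obtain ⟨ha | ha, hb | hb⟩ := hc <;> subst a b
  · rw [hcomm]; exact corner x₂ (by simp) y₂ (by simp)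
  · rw [hsymm]; exact corner x₂ (by simp) y₁ (by simp)
  · rw [hsymm, hcomm]; exact corner x₁ (by simp) y₂ (by simp)
  · exact corner x₁ (by simp) y₁ (by simp)

variable [MetricSpace X] [MetricSpace Y]

lemma eq_dist_of_isUltrametricOn (hpdp : PartialDistPreserving d)
    (hlow : ∀ p q : X × Y, dist p q ≤ d p q) (hU : IsUltrametricOn d) : d = dist := by
  funext p q
  refine le_antisymm ?_ (hlow p q)
  calc d p q ≤ max (d p (q.1, p.2)) (d (q.1, p.2) q) := hU _ _ _
    _ = dist p q := by rw [hpdp.1, hpdp.2]; rfl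

lemma eq_dist_of_coveringNumberIn_mul (hd : IsMetricOn d)
    (hlow : ∀ p q : X × Y, dist p q ≤ d p q)
    (hsymm : ∀ (x₁ x₂ : X) (y₁ y₂ : Y), d (x₁, y₁) (x₂, y₂) = d (x₂, y₁) (x₁, y₂))
    (hmul : ∀ (W : Set X) (Z : Set Y), IsCompact W → IsCompact Z → ∀ ε : ℝ, 0 < ε →
      coveringNumberIn d ε (W ×ˢ Z) (W ×ˢ Z) =
        coveringNumberIn dist ε W W * coveringNumberIn dist ε Z Z) : d = dist := by
  funext ⟨x₁, y₁⟩ ⟨x₂, y₂⟩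
  refine le_antisymm ?_ (hlow _ _)
  set m := dist (x₁, y₁) (x₂, y₂)
  rcases (dist_nonneg : 0 ≤ m).eq_or_lt with hm | hm
  · rw [dist_eq_zero.1 hm.symm, hd.1]
    exact hm.le
  have hrefl : ∀ p, d p p ≤ m := fun p => (hd.1 p).trans_le hm.le
  have hN : coveringNumberIn d m (({x₁, x₂} : Set X) ×ˢ ({y₁, y₂} : Set Y))
      (({x₁, x₂} : Set X) ×ˢ ({y₁, y₂} : Set Y)) ≤ 1 := by
    rw [hmul _ _ (toFinite _).isCompact (toFinite _).isCompact m hm]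
    exact mul_le_one' (coveringNumberIn_pair_le_one (le_max_left _ _))
      (coveringNumberIn_pair_le_one (le_max_right _ _))
  obtain ⟨c, hc, hcenter⟩ := exists_center_of_coveringNumberIn_le_one hrefl
    ((insert_nonempty _ _).prod (insert_nonempty _ _)) hN
  exact apply_le_of_center_mem_rectangle hd.2.2.1 hsymm hc hcenter

end ProductDistance

theorem ultrametric_iff_covering_multiplicative_general {X Y : Type u} [MetricSpace X] [MetricSpace Y]
    (hX : ∀ x y z : X, dist x z ≤ max (dist x y) (dist y z))
    (hY : ∀ x y z : Y, dist x z ≤ max (dist x y) (dist y z))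
    (d : X × Y → X × Y → ℝ) (hmetric : IsMetricOn d) (hpdp : PartialDistPreserving d)
    (hlow : ∀ p q : X × Y, max (dist p.1 q.1) (dist p.2 q.2) ≤ d p q)
    (hsymm : ∀ (x₁ x₂ : X) (y₁ y₂ : Y), d (x₁, y₁) (x₂, y₂) = d (x₂, y₁) (x₁, y₂)) :
    IsUltrametricOn d ↔
      ∀ (W : Set X) (Z : Set Y), IsCompact W → IsCompact Z → ∀ ε : ℝ, 0 < ε →
        coveringNumberIn d ε (W ×ˢ Z) (W ×ˢ Z) =
          coveringNumberIn dist ε W W * coveringNumberIn dist ε Z Z := by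
  have : IsUltrametricDist X := ⟨hX⟩
  have : IsUltrametricDist Y := ⟨hY⟩
  constructor
  · intro hU W Z _ _ ε hε
    rw [eq_dist_of_isUltrametricOn hpdp hlow hU]
    exact coveringNumberIn_prod hε.le W Z
  · intro hmul
    rw [eq_dist_of_coveringNumberIn_mul hmetric hlow hsymm hmul]
    exact dist_triangle_max

/-- Corollary 3.8: for nonempty ultrametric spaces `X`, `Y` and a partial
distance-preserving, symmetric-in-the-sense-of-(3:16) metric `d ≥ d_∞` on `X × Y`,
`(X × Y, d)` is ultrametric iff the covering numbers are multiplicative: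
`N_ε(W × Z) = N_ε(W) · N_ε(Z)` for all compact `W ⊆ X`, `Z ⊆ Y` and all `ε > 0`. -/
theorem ultrametric_iff_covering_multiplicative {X Y : Type u} [MetricSpace X] [MetricSpace Y]
    [Nonempty X] [Nonempty Y]
    (hX : ∀ x y z : X, dist x z ≤ max (dist x y) (dist y z))
    (hY : ∀ x y z : Y, dist x z ≤ max (dist x y) (dist y z))
    (d : X × Y → X × Y → ℝ) (hmetric : IsMetricOn d) (hpdp : PartialDistPreserving d)
    (hlow : ∀ p q : X × Y, max (dist p.1 q.1) (dist p.2 q.2) ≤ d p q)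
    (hsymm : ∀ (x₁ x₂ : X) (y₁ y₂ : Y), d (x₁, y₁) (x₂, y₂) = d (x₂, y₁) (x₁, y₂)) :
    IsUltrametricOn d ↔
      ∀ (W : Set X) (Z : Set Y), IsCompact W → IsCompact Z → ∀ ε : ℝ, 0 < ε →
        coveringNumberIn d ε (W ×ˢ Z) (W ×ˢ Z) =
          coveringNumberIn dist ε W W * coveringNumberIn dist ε Z Z :=
  ultrametric_iff_covering_multiplicative_general hX hY d hmetric hpdp hlow hsymm
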